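/- For every orientation G⃗ of a generalized corona C_n ⊙ pK_1 (n ≥ 3, p ≥ 1), we have 2 ≤ χρ(G⃗) ≤ 4. -/

import Mathlib

/-!
A base vertex and its pendants meet the rest of the graph only through the base vertex, so
a directed path between base vertices stays on the oriented cycle, and a coloring can be given
by three colors per base vertex `u`: `κ u` for `u`, `σ u` for its out-pendants and `τ u` for
its in-pendants.

Every orientation of the cycle has a levelling: a set of roots at level `0` such that each arc
leaving a non-root lowers the level by one (the sources when the orientation is acyclic, a single
vertex when it is a directed cycle). Roots get `(κ, σ, τ) = (4, 1, 1)` and a non-root at level `j`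
gets `(3, 1, 1)`, `(1, 3, 2)`, `(2, 1, 1)` or `(1, 2, 3)` according to `j % 4`. Along a directed
path of length `q` the level drops by exactly `q` until a root is reached, which the
4-periodic pattern tolerates; a path running through a root is longer than the level of its
start, and hence than the colors there. Two adjacent base vertices rule out a single color.
-/

open SimpleGraph

/-- A packing `k`-coloring of a graph: colors in `{1,…,k}`, and distinct vertices
with the same color `i` are at distance greater than `i`. -/
def IsPackingColoring {V : Type*} (G : SimpleGraph V) (k : ℕ) (c : V → ℕ) : Prop :=
  (∀ v, 1 ≤ c v ∧ c v ≤ k) ∧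
  ∀ u v : V, u ≠ v → c u = c v → (c u : ℕ∞) < G.edist u v

/-- The packing chromatic number. -/
noncomputable def packingChromaticNumber {V : Type*} (G : SimpleGraph V) : ℕ :=
  sInf {k | ∃ c, IsPackingColoring G k c}

/-- The generalized corona `G ⊙ pK₁`: add `p` pendant neighbors to each vertex. -/
def genCorona {V : Type*} (G : SimpleGraph V) (p : ℕ) : SimpleGraph (V ⊕ V × Fin p) where
  Adj x y :=
    (∃ u v, x = Sum.inl u ∧ y = Sum.inl v ∧ G.Adj u v) ∨
    (∃ u j, x = Sum.inl u ∧ y = Sum.inr (u, j)) ∨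
    (∃ u j, x = Sum.inr (u, j) ∧ y = Sum.inl u)
  symm := by
    constructor
    rintro x y (⟨u, v, rfl, rfl, h⟩ | ⟨u, j, rfl, rfl⟩ | ⟨u, j, rfl, rfl⟩)
    · exact Or.inl ⟨v, u, rfl, rfl, h.symm⟩
    · exact Or.inr (Or.inr ⟨u, j, rfl, rfl⟩)
    · exact Or.inr (Or.inl ⟨u, j, rfl, rfl⟩)
  loopless := by
    constructor
    rintro x (⟨u, v, rfl, h1, h⟩ | ⟨u, j, rfl, h1⟩ | ⟨u, j, rfl, h1⟩)
    · cases h1; exact (G.ne_of_adj h) rfl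
    · exact absurd h1 (by simp)
    · exact absurd h1 (by simp)

/-- `A` is an orientation of `G`: each edge gets exactly one direction. -/
def IsOrientation {V : Type*} (G : SimpleGraph V) (A : V → V → Prop) : Prop :=
  (∀ u v, A u v → ¬ A v u) ∧ (∀ u v, G.Adj u v ↔ (A u v ∨ A v u))

/-- Existence of a directed path of length `n` from `u` to `v`. -/
def DPath {V : Type*} (A : V → V → Prop) : ℕ → V → V → Prop
  | 0, u, v => u = v
  | (n+1), u, v => ∃ w, A u w ∧ DPath A n w v

/-- The weak directed distance: length of a shortest directed path joining `u` and `v`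
in either direction. -/
noncomputable def wdist {V : Type*} (A : V → V → Prop) (u v : V) : ℕ∞ :=
  sInf {m : ℕ∞ | ∃ n : ℕ, m = n ∧ (DPath A n u v ∨ DPath A n v u)}

/-- A packing `k`-coloring of a digraph, w.r.t. the weak directed distance. -/
def IsDPackingColoring {V : Type*} (A : V → V → Prop) (k : ℕ) (c : V → ℕ) : Prop :=
  (∀ v, 1 ≤ c v ∧ c v ≤ k) ∧
  ∀ u v : V, u ≠ v → c u = c v → (c u : ℕ∞) < wdist A u v

/-- The packing chromatic number of a digraph. -/
noncomputable def dPackingChromaticNumber {V : Type*} (A : V → V → Prop) : ℕ :=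
  sInf {k | ∃ c, IsDPackingColoring A k c}

/-- A source: no incoming arcs. -/
def IsSource {V : Type*} (A : V → V → Prop) (v : V) : Prop := ∀ u, ¬ A u v

/-- A sink: no outgoing arcs. -/
def IsSink {V : Type*} (A : V → V → Prop) (v : V) : Prop := ∀ u, ¬ A v u


section Digraph

variable {V : Type*} {A : V → V → Prop}

theorem DPath.succ_iff_right {n : ℕ} {u v : V} :
    DPath A (n + 1) u v ↔ ∃ w, DPath A n u w ∧ A w v := by
  induction n generalizing u with
  | zero => simp [DPath]
  | succ n ih =>
    constructor
    · rintro ⟨x, hux, hxv⟩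
      obtain ⟨w, hxw, hwv⟩ := ih.mp hxv
      exact ⟨w, ⟨x, hux, hxw⟩, hwv⟩
    · rintro ⟨w, ⟨x, hux, hxw⟩, hwv⟩
      exact ⟨x, hux, ih.mpr ⟨w, hxw, hwv⟩⟩

theorem lt_wdist_of_forall_not_dPath {u v : V} {c : ℕ}
    (h : ∀ q ≤ c, ¬ DPath A q u v ∧ ¬ DPath A q v u) : (c : ℕ∞) < wdist A u v := by
  refine lt_of_lt_of_le (ENat.natCast_lt_natCast.mpr c.lt_succ_self) (le_sInf ?_)
  rintro _ ⟨q, rfl, hq⟩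
  by_contra! hle
  have hqc : q ≤ c := Nat.le_of_lt_succ (ENat.natCast_lt_natCast.mp hle)
  exact hq.elim (h q hqc).1 (h q hqc).2

theorem IsOrientation.two_le_of_isDPackingColoring {G : SimpleGraph V} {k : ℕ} {c : V → ℕ}
    (hA : IsOrientation G A) {u v : V} (hadj : G.Adj u v) (hc : IsDPackingColoring A k c) :
    2 ≤ k := by
  by_contra! hk
  have hcu := hc.1 u
  have hcv := hc.1 v
  have hlt := hc.2 u v hadj.ne (by omega)
  have hwd : wdist A u v ≤ 1 := by
    refine sInf_le ⟨1, by simp, ?_⟩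
    rcases (hA.2 u v).mp hadj with huv | hvu
    exacts [Or.inl ⟨v, huv, rfl⟩, Or.inr ⟨u, hvu, rfl⟩]
  rw [show c u = 1 by omega] at hlt
  exact absurd (hlt.trans_le hwd) (lt_irrefl _)

theorem IsSource.eq_of_dPath {u v : V} {q : ℕ} (hv : IsSource A v) (h : DPath A q u v) :
    u = v := by
  rcases q with _ | q
  · exact h
  · obtain ⟨x, -, hxv⟩ := DPath.succ_iff_right.mp h
    exact absurd hxv (hv x)

end Digraph

section Corona

variable {V : Type*} {G : SimpleGraph V} {p : ℕ} {A : V ⊕ V × Fin p → V ⊕ V × Fin p → Prop}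

def baseArc (A : V ⊕ V × Fin p → V ⊕ V × Fin p → Prop) (u v : V) : Prop :=
  A (.inl u) (.inl v)

theorem IsOrientation.of_genCorona (hA : IsOrientation (genCorona G p) A) :
    IsOrientation G (baseArc A) := by
  refine ⟨fun u v => hA.1 _ _, fun u v => ?_⟩
  rw [baseArc, baseArc, ← hA.2]
  constructor
  · exact fun h => Or.inl ⟨u, v, rfl, rfl, h⟩
  · rintro (⟨u, v, ⟨⟩, ⟨⟩, h⟩ | ⟨_, _, _, ⟨⟩⟩ | ⟨_, _, ⟨⟩, _⟩)
    exact h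

variable (hA : IsOrientation (genCorona G p) A)
include hA

theorem IsOrientation.eq_inl_of_arc_from_inr {u : V} {j : Fin p} {y} (h : A (.inr (u, j)) y) :
    y = .inl u := by
  rcases (hA.2 _ _).mpr (Or.inl h) with ⟨_, _, ⟨⟩, _, _⟩ | ⟨_, _, ⟨⟩, _⟩ | ⟨_, _, ⟨⟩, rfl⟩
  rfl

theorem IsOrientation.eq_inl_of_arc_to_inr {v : V} {j : Fin p} {x} (h : A x (.inr (v, j))) :
    x = .inl v := by
  rcases (hA.2 _ _).mpr (Or.inl h) with ⟨_, _, _, ⟨⟩, _⟩ | ⟨_, _, rfl, ⟨⟩⟩ | ⟨_, _, _, ⟨⟩⟩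
  rfl

theorem IsOrientation.dPath_inl_inl_iff {q : ℕ} {u v : V} :
    DPath A q (.inl u) (.inl v) ↔ DPath (baseArc A) q u v := by
  induction q generalizing u with
  | zero => exact Sum.inl_injective.eq_iff
  | succ q ih =>
    refine ⟨fun ⟨w, huw, hwv⟩ => ?_, fun ⟨w, huw, hwv⟩ => ⟨.inl w, huw, ih.mpr hwv⟩⟩
    rcases w with w | ⟨t, j⟩
    · exact ⟨w, huw, ih.mp hwv⟩
    · obtain ⟨⟩ := hA.eq_inl_of_arc_to_inr huw
      rcases q with _ | q
      · cases hwv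
      · obtain ⟨x, hwx, -⟩ := hwv
        obtain ⟨⟩ := hA.eq_inl_of_arc_from_inr hwx
        exact absurd hwx (hA.1 _ _ huw)

theorem IsOrientation.dPath_from_inr {q : ℕ} {u : V} {j : Fin p} {y}
    (h : DPath A q (.inr (u, j)) y) :
    y = .inr (u, j) ∨
      ∃ q', q = q' + 1 ∧ A (.inr (u, j)) (.inl u) ∧ DPath A q' (.inl u) y := by
  rcases q with _ | q
  · exact Or.inl h.symm
  · obtain ⟨w, huw, hwy⟩ := h
    obtain rfl := hA.eq_inl_of_arc_from_inr huw
    exact Or.inr ⟨q, rfl, huw, hwy⟩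

theorem IsOrientation.dPath_to_inr {q : ℕ} {v : V} {j : Fin p} {x}
    (h : DPath A q x (.inr (v, j))) :
    x = .inr (v, j) ∨
      ∃ q', q = q' + 1 ∧ DPath A q' x (.inl v) ∧ A (.inl v) (.inr (v, j)) := by
  rcases q with _ | q
  · exact Or.inl h
  · obtain ⟨w, hxw, hwv⟩ := DPath.succ_iff_right.mp h
    obtain rfl := hA.eq_inl_of_arc_to_inr hwv
    exact Or.inr ⟨q, rfl, hxw, hwv⟩

end Corona

section CoronaColoring

variable {V : Type*} {G : SimpleGraph V} {p : ℕ} {A : V ⊕ V × Fin p → V ⊕ V × Fin p → Prop}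

open Classical in
noncomputable def coronaColoring (A : V ⊕ V × Fin p → V ⊕ V × Fin p → Prop) (κ σ τ : V → ℕ) :
    V ⊕ V × Fin p → ℕ
  | .inl u => κ u
  | .inr (u, j) => if A (.inl u) (.inr (u, j)) then σ u else τ u

variable (hA : IsOrientation (genCorona G p) A) {κ σ τ : V → ℕ}
include hA

theorem coronaColoring_inr_of_arc_from_inr {u : V} {j : Fin p} (h : A (.inr (u, j)) (.inl u)) :
    coronaColoring A κ σ τ (.inr (u, j)) = τ u :=
  if_neg (hA.1 _ _ h)

variable
  (hκκ : ∀ u v q, DPath (baseArc A) q u v → u ≠ v → κ u = κ v → κ u < q)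
  (hκσ : ∀ u v q, DPath (baseArc A) q u v → κ u = σ v → κ u ≤ q)
  (hτκ : ∀ u v q, DPath (baseArc A) q u v → τ u = κ v → τ u ≤ q)
  (hτσ : ∀ u v q, DPath (baseArc A) q u v → τ u = σ v → τ u ≤ q + 1)
include hκκ hκσ hτκ hτσ

theorem not_dPath_of_coronaColoring_eq {x y : V ⊕ V × Fin p} {q : ℕ} (hxy : x ≠ y)
    (hc : coronaColoring A κ σ τ x = coronaColoring A κ σ τ y)
    (hq : q ≤ coronaColoring A κ σ τ x) : ¬ DPath A q x y := by
  intro h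
  rcases x with u | ⟨u, i⟩ <;> rcases y with v | ⟨v, j⟩
  · exact (hκκ u v q (hA.dPath_inl_inl_iff.mp h) (by rintro rfl; exact hxy rfl) hc).not_ge hq
  · obtain h | ⟨q, rfl, h, hv⟩ := hA.dPath_to_inr h
    · cases h
    simp only [coronaColoring, if_pos hv] at hc hq
    exact (hκσ u v q (hA.dPath_inl_inl_iff.mp h) hc).not_gt hq
  · obtain h | ⟨q, rfl, hu, h⟩ := hA.dPath_from_inr h
    · cases h
    rw [coronaColoring_inr_of_arc_from_inr hA hu] at hc hq
    exact (hτκ u v q (hA.dPath_inl_inl_iff.mp h) hc).not_gt hq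
  · obtain h | ⟨q, rfl, hu, h⟩ := hA.dPath_from_inr h
    · exact hxy h.symm
    obtain h | ⟨q, rfl, h, hv⟩ := hA.dPath_to_inr h
    · cases h
    rw [coronaColoring_inr_of_arc_from_inr hA hu] at hc hq
    simp only [coronaColoring, if_pos hv] at hc
    exact (hτσ u v q (hA.dPath_inl_inl_iff.mp h) hc).not_gt hq

theorem isDPackingColoring_coronaColoring {k : ℕ}
    (hκ : ∀ u, 1 ≤ κ u ∧ κ u ≤ k) (hσ : ∀ u, 1 ≤ σ u ∧ σ u ≤ k) (hτ : ∀ u, 1 ≤ τ u ∧ τ u ≤ k) :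
    IsDPackingColoring A k (coronaColoring A κ σ τ) := by
  refine ⟨?_, fun x y hxy hc => lt_wdist_of_forall_not_dPath fun q hq => ⟨?_, ?_⟩⟩
  · rintro (u | ⟨u, j⟩)
    · exact hκ u
    · dsimp only [coronaColoring]
      split_ifs
      exacts [hσ u, hτ u]
  · exact not_dPath_of_coronaColoring_eq hA hκκ hκσ hτκ hτσ hxy hc hq
  · exact not_dPath_of_coronaColoring_eq hA hκκ hκσ hτκ hτσ hxy.symm hc.symm (hc ▸ hq)

end CoronaColoring

structure IsLevelling {V : Type*} (B : V → V → Prop) (R : Set V) (J : V → ℕ) : Prop where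
  level_root : ∀ u ∈ R, J u = 0
  level_arc : ∀ u w, B u w → u ∉ R → J u = J w + 1
  eq_of_dPath_root : ∀ u v q, u ∈ R → v ∈ R → DPath B q u v → u = v

section LevelColors

def levelColor (j : ℕ) : ℕ := if j % 4 = 0 then 3 else if j % 4 = 2 then 2 else 1

def outPendantColor (j : ℕ) : ℕ := if j % 4 = 1 then 3 else if j % 4 = 3 then 2 else 1

def inPendantColor (j : ℕ) : ℕ := if j % 4 = 1 then 2 else if j % 4 = 3 then 3 else 1

variable {j q : ℕ}

theorem levelColor_mem : 1 ≤ levelColor j ∧ levelColor j ≤ 3 := by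
  unfold levelColor; split_ifs <;> omega

theorem outPendantColor_mem : 1 ≤ outPendantColor j ∧ outPendantColor j ≤ 3 := by
  unfold outPendantColor; split_ifs <;> omega

theorem inPendantColor_mem : 1 ≤ inPendantColor j ∧ inPendantColor j ≤ 3 := by
  unfold inPendantColor; split_ifs <;> omega

theorem levelColor_le (hj : 0 < j) : levelColor j ≤ j := by
  unfold levelColor; split_ifs <;> omega

theorem inPendantColor_le_succ : inPendantColor j ≤ j + 1 := by
  unfold inPendantColor; split_ifs <;> omega

theorem levelColor_add_lt_of_eq_levelColor (hq : 0 < q)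
    (h : levelColor (j + q) = levelColor j) : levelColor (j + q) < q := by
  unfold levelColor at *; split_ifs at * <;> omega

theorem levelColor_add_le_of_eq_outPendantColor
    (h : levelColor (j + q) = outPendantColor j) : levelColor (j + q) ≤ q := by
  unfold levelColor outPendantColor at *; split_ifs at * <;> omega

theorem inPendantColor_add_le_of_eq_levelColor
    (h : inPendantColor (j + q) = levelColor j) : inPendantColor (j + q) ≤ q := by
  unfold inPendantColor levelColor at *; split_ifs at * <;> omega

theorem inPendantColor_add_le_of_eq_outPendantColor
    (h : inPendantColor (j + q) = outPendantColor j) : inPendantColor (j + q) ≤ q + 1 := by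
  unfold inPendantColor outPendantColor at *; split_ifs at * <;> omega

end LevelColors

section Levelling

variable {V : Type*} (R : Set V) (J : V → ℕ)

open Classical in
noncomputable def rootedColor (u : V) : ℕ := if u ∈ R then 4 else levelColor (J u)

open Classical in
noncomputable def rootedOutColor (u : V) : ℕ := if u ∈ R then 1 else outPendantColor (J u)

open Classical in
noncomputable def rootedInColor (u : V) : ℕ := if u ∈ R then 1 else inPendantColor (J u)

variable {R J} {B : V → V → Prop} {u v : V} {q : ℕ}

theorem rootedColor_of_mem (hu : u ∈ R) : rootedColor R J u = 4 := if_pos hu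

theorem rootedOutColor_of_mem (hu : u ∈ R) : rootedOutColor R J u = 1 := if_pos hu

theorem rootedInColor_of_mem (hu : u ∈ R) : rootedInColor R J u = 1 := if_pos hu

theorem rootedColor_of_notMem (hu : u ∉ R) : rootedColor R J u = levelColor (J u) := if_neg hu

theorem rootedOutColor_of_notMem (hu : u ∉ R) : rootedOutColor R J u = outPendantColor (J u) :=
  if_neg hu

theorem rootedInColor_of_notMem (hu : u ∉ R) : rootedInColor R J u = inPendantColor (J u) :=
  if_neg hu

theorem rootedColor_mem : 1 ≤ rootedColor R J u ∧ rootedColor R J u ≤ 4 := by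
  unfold rootedColor
  split_ifs
  exacts [⟨by norm_num, le_rfl⟩, ⟨levelColor_mem.1, levelColor_mem.2.trans (by norm_num)⟩]

theorem rootedOutColor_mem : 1 ≤ rootedOutColor R J u ∧ rootedOutColor R J u ≤ 3 := by
  unfold rootedOutColor
  split_ifs
  exacts [⟨le_rfl, by norm_num⟩, outPendantColor_mem]

theorem rootedInColor_mem : 1 ≤ rootedInColor R J u ∧ rootedInColor R J u ≤ 3 := by
  unfold rootedInColor
  split_ifs
  exacts [⟨le_rfl, by norm_num⟩, inPendantColor_mem]

theorem mem_of_rootedColor_eq_four (h : rootedColor R J u = 4) : u ∈ R := by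
  by_contra hu
  have := (levelColor_mem (j := J u)).2
  rw [rootedColor_of_notMem hu] at h
  omega

namespace IsLevelling

variable (hL : IsLevelling B R J)
include hL

theorem level_cases_of_dPath (hu : u ∉ R) (h : DPath B q u v) :
    (0 < J u ∧ J u < q) ∨ J u = J v + q := by
  induction q generalizing u with
  | zero => exact Or.inr (congrArg J h)
  | succ q ih =>
    obtain ⟨w, huw, hwv⟩ := h
    have hJ := hL.level_arc u w huw hu
    by_cases hw : w ∈ R
    · rcases q with _ | q
      · obtain rfl : w = v := hwv
        omega
      · have := hL.level_root w hw
        omega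
    · rcases ih hw hwv with h | h <;> omega

theorem rootedColor_lt (h : DPath B q u v) (huv : u ≠ v)
    (hc : rootedColor R J u = rootedColor R J v) : rootedColor R J u < q := by
  by_cases hu : u ∈ R
  · rw [rootedColor_of_mem hu] at hc
    exact absurd (hL.eq_of_dPath_root u v q hu (mem_of_rootedColor_eq_four hc.symm) h) huv
  have hv : v ∉ R := fun hv => hu (mem_of_rootedColor_eq_four (hc.trans (rootedColor_of_mem hv)))
  rw [rootedColor_of_notMem hu, rootedColor_of_notMem hv] at hc
  rw [rootedColor_of_notMem hu]
  rcases hL.level_cases_of_dPath hu h with ⟨hpos, hlt⟩ | hJ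
  · exact (levelColor_le hpos).trans_lt hlt
  · rcases Nat.eq_zero_or_pos q with rfl | hq
    · exact absurd h huv
    · rw [hJ] at hc ⊢
      exact levelColor_add_lt_of_eq_levelColor hq hc

theorem rootedColor_le_of_eq_rootedOutColor (h : DPath B q u v)
    (hc : rootedColor R J u = rootedOutColor R J v) : rootedColor R J u ≤ q := by
  have hv3 := (rootedOutColor_mem (R := R) (J := J) (u := v)).2
  by_cases hu : u ∈ R
  · rw [rootedColor_of_mem hu] at hc
    omega
  by_cases hv : v ∈ R
  · rw [hc, rootedOutColor_of_mem hv]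
    rcases Nat.eq_zero_or_pos q with rfl | hq
    exacts [absurd ((show u = v from h) ▸ hv) hu, hq]
  rw [rootedColor_of_notMem hu, rootedOutColor_of_notMem hv] at hc
  rw [rootedColor_of_notMem hu]
  rcases hL.level_cases_of_dPath hu h with ⟨hpos, hlt⟩ | hJ
  · exact (levelColor_le hpos).trans hlt.le
  · rw [hJ] at hc ⊢
    exact levelColor_add_le_of_eq_outPendantColor hc

theorem rootedInColor_le_of_eq_rootedColor (h : DPath B q u v)
    (hc : rootedInColor R J u = rootedColor R J v) : rootedInColor R J u ≤ q := by
  have hu3 := (rootedInColor_mem (R := R) (J := J) (u := u)).2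
  by_cases hu : u ∈ R
  · rw [rootedInColor_of_mem hu] at hc ⊢
    rcases Nat.eq_zero_or_pos q with rfl | hq
    · rw [← (show u = v from h), rootedColor_of_mem hu] at hc
      omega
    · exact hq
  by_cases hv : v ∈ R
  · rw [rootedColor_of_mem hv] at hc
    omega
  rw [rootedInColor_of_notMem hu, rootedColor_of_notMem hv] at hc
  rw [rootedInColor_of_notMem hu]
  rcases hL.level_cases_of_dPath hu h with ⟨-, hlt⟩ | hJ
  · exact inPendantColor_le_succ.trans hlt
  · rw [hJ] at hc ⊢
    exact inPendantColor_add_le_of_eq_levelColor hc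

theorem rootedInColor_le_of_eq_rootedOutColor (h : DPath B q u v)
    (hc : rootedInColor R J u = rootedOutColor R J v) : rootedInColor R J u ≤ q + 1 := by
  by_cases hu : u ∈ R
  · rw [rootedInColor_of_mem hu]
    omega
  by_cases hv : v ∈ R
  · rw [hc, rootedOutColor_of_mem hv]
    omega
  rw [rootedInColor_of_notMem hu, rootedOutColor_of_notMem hv] at hc
  rw [rootedInColor_of_notMem hu]
  rcases hL.level_cases_of_dPath hu h with ⟨-, hlt⟩ | hJ
  · exact inPendantColor_le_succ.trans (by omega)
  · rw [hJ] at hc ⊢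
    exact inPendantColor_add_le_of_eq_outPendantColor hc

end IsLevelling

theorem IsLevelling.exists_isDPackingColoring {p : ℕ} {G : SimpleGraph V}
    {A : V ⊕ V × Fin p → V ⊕ V × Fin p → Prop} (hA : IsOrientation (genCorona G p) A)
    (hL : IsLevelling (baseArc A) R J) : ∃ c, IsDPackingColoring A 4 c :=
  ⟨_, isDPackingColoring_coronaColoring hA
    (fun _ _ _ => hL.rootedColor_lt) (fun _ _ _ => hL.rootedColor_le_of_eq_rootedOutColor)
    (fun _ _ _ => hL.rootedInColor_le_of_eq_rootedColor)
    (fun _ _ _ => hL.rootedInColor_le_of_eq_rootedOutColor) (fun _ => rootedColor_mem)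
    (fun _ => ⟨rootedOutColor_mem.1, rootedOutColor_mem.2.trans (by norm_num)⟩)
    (fun _ => ⟨rootedInColor_mem.1, rootedInColor_mem.2.trans (by norm_num)⟩)⟩

end Levelling

section Cycle

open scoped Fin.NatCast

variable {m : ℕ} {B : Fin (m + 2) → Fin (m + 2) → Prop}

def IsClockwise (B : Fin (m + 2) → Fin (m + 2) → Prop) (i : Fin (m + 2)) : Prop := B i (i + 1)

theorem IsOrientation.cycleGraph_arc (hB : IsOrientation (cycleGraph (m + 2)) B) {u w : Fin (m + 2)}
    (h : B u w) : (w = u + 1 ∧ IsClockwise B u) ∨ (u = w + 1 ∧ ¬ IsClockwise B w) := by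
  rcases cycleGraph_adj.mp ((hB.2 u w).mpr (Or.inl h)) with huw | hwu
  · obtain rfl := sub_eq_iff_eq_add'.mp huw
    exact Or.inr ⟨rfl, hB.1 _ _ h⟩
  · obtain rfl := sub_eq_iff_eq_add'.mp hwu
    exact Or.inl ⟨rfl, h⟩

theorem isLevelling_of_forall_isClockwise (hB : IsOrientation (cycleGraph (m + 2)) B)
    (h : ∀ i, IsClockwise B i) : IsLevelling B {Fin.last (m + 1)} (fun u => m + 1 - u.val) where
  level_root u hu := by simp [Set.mem_singleton_iff.mp hu]
  level_arc u w huw hu := by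
    rcases hB.cycleGraph_arc huw with ⟨rfl, -⟩ | ⟨-, hw⟩
    · have hlt : u < Fin.last (m + 1) := Fin.lt_last_iff_ne_last.mpr hu
      have hval : u.val < m + 1 := hlt
      show m + 1 - u.val = m + 1 - (u + 1).val + 1
      rw [Fin.val_add_one_of_lt hlt]
      omega
    · exact absurd (h w) hw
  eq_of_dPath_root u v _ hu hv _ := hu.trans hv.symm

theorem isLevelling_of_forall_not_isClockwise (hB : IsOrientation (cycleGraph (m + 2)) B)
    (h : ∀ i, ¬ IsClockwise B i) : IsLevelling B {0} Fin.val where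
  level_root u hu := by simp [Set.mem_singleton_iff.mp hu]
  level_arc u w huw hu := by
    rcases hB.cycleGraph_arc huw with ⟨-, hu'⟩ | ⟨rfl, -⟩
    · exact absurd hu' (h u)
    · have hw : w ≠ Fin.last (m + 1) := by
        rintro rfl
        exact hu (Fin.last_add_one _)
      exact Fin.val_add_one_of_lt (Fin.lt_last_iff_ne_last.mpr hw)
  eq_of_dPath_root u v _ hu hv _ := hu.trans hv.symm

section Acyclic

open Classical

theorem exists_not_isClockwise_add (h0 : ∃ i, ¬ IsClockwise B i) (u : Fin (m + 2)) :
    ∃ t : ℕ, ¬ IsClockwise B (u + t) := by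
  obtain ⟨i, hi⟩ := h0
  exact ⟨(i - u).val, by rwa [Fin.cast_val_eq_self, add_sub_cancel]⟩

theorem exists_isClockwise_sub (h1 : ∃ i, IsClockwise B i) (u : Fin (m + 2)) :
    ∃ t : ℕ, IsClockwise B (u - t - 1) := by
  obtain ⟨i, hi⟩ := h1
  exact ⟨(u - 1 - i).val, by rwa [Fin.cast_val_eq_self, sub_right_comm, sub_sub_cancel]⟩

noncomputable def clockwiseRun (h0 : ∃ i, ¬ IsClockwise B i) (u : Fin (m + 2)) : ℕ :=
  Nat.find (exists_not_isClockwise_add h0 u)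

noncomputable def counterclockwiseRun (h1 : ∃ i, IsClockwise B i) (u : Fin (m + 2)) : ℕ :=
  Nat.find (exists_isClockwise_sub h1 u)

/-- A non-source has a single out-neighbour on the cycle, so the directed path it starts is
unique; its level is the length of that path, which ends at a sink. -/
noncomputable def acyclicLevel (h0 : ∃ i, ¬ IsClockwise B i) (h1 : ∃ i, IsClockwise B i)
    (u : Fin (m + 2)) : ℕ :=
  if IsSource B u then 0
  else if IsClockwise B u then clockwiseRun h0 u else counterclockwiseRun h1 u

variable (h0 : ∃ i, ¬ IsClockwise B i) (h1 : ∃ i, IsClockwise B i) {u : Fin (m + 2)}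

theorem clockwiseRun_eq_zero (h : ¬ IsClockwise B u) : clockwiseRun h0 u = 0 :=
  Nat.find_eq_zero _ |>.mpr (by rwa [Nat.cast_zero, add_zero])

theorem clockwiseRun_eq_succ (h : IsClockwise B u) :
    clockwiseRun h0 u = clockwiseRun h0 (u + 1) + 1 := by
  have shift (t : ℕ) : u + ((t + 1 : ℕ) : Fin (m + 2)) = u + 1 + t := by push_cast; abel
  have hsucc : ∃ t : ℕ, ¬ IsClockwise B (u + ((t + 1 : ℕ) : Fin (m + 2))) := by
    simpa only [shift] using exists_not_isClockwise_add h0 (u + 1)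
  rw [clockwiseRun, Nat.find_comp_succ _ hsucc (by rwa [Nat.cast_zero, add_zero, not_not])]
  exact congrArg (· + 1) (Nat.find_congr' (by simp only [shift, implies_true]))

theorem counterclockwiseRun_succ_eq_zero (h : IsClockwise B u) :
    counterclockwiseRun h1 (u + 1) = 0 :=
  Nat.find_eq_zero _ |>.mpr (by rwa [Nat.cast_zero, sub_zero, add_sub_cancel_right])

theorem counterclockwiseRun_succ (h : ¬ IsClockwise B u) :
    counterclockwiseRun h1 (u + 1) = counterclockwiseRun h1 u + 1 := by
  have shift (t : ℕ) : u + 1 - ((t + 1 : ℕ) : Fin (m + 2)) - 1 = u - t - 1 := by push_cast; abel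
  have hsucc : ∃ t : ℕ, IsClockwise B (u + 1 - ((t + 1 : ℕ) : Fin (m + 2)) - 1) := by
    simpa only [shift] using exists_isClockwise_sub h1 u
  rw [counterclockwiseRun,
    Nat.find_comp_succ _ hsucc (by rwa [Nat.cast_zero, sub_zero, add_sub_cancel_right])]
  exact congrArg (· + 1) (Nat.find_congr' (by simp only [shift, implies_true]))

theorem IsOrientation.isSource_of_isClockwise (hB : IsOrientation (cycleGraph (m + 2)) B)
    (h : IsClockwise B u) (h' : ¬ IsClockwise B (u - 1)) : IsSource B u := by
  intro x hx
  rcases hB.cycleGraph_arc hx with ⟨rfl, hx'⟩ | ⟨rfl, -⟩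
  · exact h' (by rwa [add_sub_cancel_right])
  · exact hB.1 _ _ h hx

theorem isLevelling_acyclicLevel (hB : IsOrientation (cycleGraph (m + 2)) B) :
    IsLevelling B {u | IsSource B u} (acyclicLevel h0 h1) where
  level_root u hu := if_pos hu
  level_arc u w huw (hu : ¬ IsSource B u) := by
    have hw : ¬ IsSource B w := fun hw => hw u huw
    rcases hB.cycleGraph_arc huw with ⟨rfl, hcw⟩ | ⟨rfl, hccw⟩
    · have hlevel : acyclicLevel h0 h1 (u + 1) = clockwiseRun h0 (u + 1) := by
        by_cases hcw' : IsClockwise B (u + 1)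
        · simp only [acyclicLevel, if_neg hw, if_pos hcw']
        · simp only [acyclicLevel, if_neg hw, if_neg hcw', clockwiseRun_eq_zero h0 hcw',
            counterclockwiseRun_succ_eq_zero h1 hcw]
      rw [hlevel, acyclicLevel, if_neg hu, if_pos hcw, clockwiseRun_eq_succ h0 hcw]
    · have hccw' : ¬ IsClockwise B (w + 1) := fun hcw =>
        hu (hB.isSource_of_isClockwise hcw (by rwa [add_sub_cancel_right]))
      simp only [acyclicLevel, if_neg hu, if_neg hw, if_neg hccw', if_neg hccw,
        counterclockwiseRun_succ h1 hccw]
  eq_of_dPath_root _ _ _ _ hv h := IsSource.eq_of_dPath hv h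

end Acyclic

theorem IsOrientation.exists_isLevelling_cycleGraph (hB : IsOrientation (cycleGraph (m + 2)) B) :
    ∃ R J, IsLevelling B R J := by
  by_cases h0 : ∃ i, ¬ IsClockwise B i
  · by_cases h1 : ∃ i, IsClockwise B i
    · exact ⟨_, _, isLevelling_acyclicLevel h0 h1 hB⟩
    · push Not at h1
      exact ⟨_, _, isLevelling_of_forall_not_isClockwise hB h1⟩
  · push Not at h0
    exact ⟨_, _, isLevelling_of_forall_isClockwise hB h0⟩

end Cycle

theorem dpacking_oriented_corona_cycle_general (n p : ℕ) (hn : 3 ≤ n)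
    (A : (Fin n ⊕ Fin n × Fin p) → (Fin n ⊕ Fin n × Fin p) → Prop)
    (hA : IsOrientation (genCorona (cycleGraph n) p) A) :
    2 ≤ dPackingChromaticNumber A ∧ dPackingChromaticNumber A ≤ 4 := by
  obtain ⟨m, rfl⟩ : ∃ m, n = m + 2 := ⟨n - 2, by omega⟩
  obtain ⟨R, J, hL⟩ := hA.of_genCorona.exists_isLevelling_cycleGraph
  obtain ⟨c, hc⟩ := hL.exists_isDPackingColoring hA
  have hadj : (genCorona (cycleGraph (m + 2)) p).Adj (.inl 0) (.inl 1) :=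
    Or.inl ⟨0, 1, rfl, rfl, cycleGraph_adj.mpr (Or.inr (sub_zero 1))⟩
  exact ⟨le_csInf ⟨4, c, hc⟩ fun _ ⟨_, hc'⟩ => hA.two_le_of_isDPackingColoring hadj hc',
    Nat.sInf_le ⟨c, hc⟩⟩

theorem dpacking_oriented_corona_cycle (n p : ℕ) (hn : 3 ≤ n) (hp : 1 ≤ p)
    (A : (Fin n ⊕ Fin n × Fin p) → (Fin n ⊕ Fin n × Fin p) → Prop)
    (hA : IsOrientation (genCorona (cycleGraph n) p) A) :
    2 ≤ dPackingChromaticNumber A ∧ dPackingChromaticNumber A ≤ 4 :=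
  dpacking_oriented_corona_cycle_general n p hn A hA
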